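/- For any fixed nonzero vector c in F_2^{2N}, the number of symplectic self-dual subspaces of F_2^{2N} containing c equals ∏_{n=1}^{N-1}(2^{2N-n} - 2^n) / ∏_{n=1}^{N-1}(2^N - 2^n). -/

import Mathlib

/-- `F_2^{2N}`, grouped into `N` blocks of two coordinates. -/
abbrev V (N : ℕ) := Fin N → ZMod 2 × ZMod 2

/-- The standard symplectic product `u ⊙ v = uᵀ P v` on `F_2^{2N}`, where `P` is
block-diagonal with `N` antidiagonal `2×2` blocks. -/
def symp {N : ℕ} (u v : V N) : ZMod 2 :=
  ∑ n, ((u n).1 * (v n).2 + (u n).2 * (v n).1)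

/-- The symplectic dual `C^⊥ = {u : ∀ v ∈ C, u ⊙ v = 0}` of a subspace `C ⊆ F_2^{2N}`. -/
def sympDual {N : ℕ} (C : Submodule (ZMod 2) (V N)) : Submodule (ZMod 2) (V N) where
  carrier := {u | ∀ v ∈ C, symp u v = 0}
  zero_mem' := by intro v hv; simp [symp]
  add_mem' := by
    intro a b ha hb v hv
    have h : symp (a + b) v = symp a v + symp b v := by
      simp only [symp, ← Finset.sum_add_distrib]
      refine Finset.sum_congr rfl fun n _ => ?_
      simp [Prod.fst_add, Prod.snd_add]; ring
    rw [h, ha v hv, hb v hv, add_zero]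
  smul_mem' := by
    intro c u hu v hv
    have h : symp (c • u) v = c * symp u v := by
      simp only [symp, Finset.mul_sum]
      refine Finset.sum_congr rfl fun n _ => ?_
      simp [Prod.smul_fst, Prod.smul_snd, smul_eq_mul]; ring
    rw [h, hu v hv, mul_zero]

/-!
The symplectic group acts transitively on nonzero vectors (two transvections suffice), so the
number `f N` of self-dual subspaces through `c ≠ 0` does not depend on `c`. Every self-dual
subspace has dimension `N`, and counting the pairs `(C, x)` with `C` self-dual and `0 ≠ x ∈ C` in
two ways gives `g N * (2 ^ N - 1) = f N * (2 ^ (2N) - 1)`, where `g N` is the number of all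
self-dual subspaces. For the first basis vector `e`, symplectic reduction `C ↦ C / ⟨e⟩ ⊆ e^⊥ / ⟨e⟩`
identifies the self-dual subspaces of `F_2^{2N+2}` containing `e` with those of `F_2^{2N}`, so
`f (N + 1) = g N`. Hence `g (N + 1) = g N * (2 ^ (N + 1) + 1)`, and the quotient in the statement
is `g (N - 1)` once the factors `2 ^ N - 2 ^ n` are cancelled.
-/

theorem Nat.card_subtype_ne {α : Type*} [Finite α] (a : α) :
    Nat.card {x // x ≠ a} = Nat.card α - 1 := by
  classical
  have := Fintype.ofFinite α
  simp only [Nat.card_eq_fintype_card, Fintype.card_subtype_compl, Fintype.card_subtype_eq]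

theorem Nat.card_mul_eq_card_mul {α β : Type*} [Finite α] [Finite β] (r : α → β → Prop)
    {m n : ℕ} (hm : ∀ a, Nat.card {b // r a b} = m) (hn : ∀ b, Nat.card {a // r a b} = n) :
    Nat.card α * m = Nat.card β * n := by
  have := Fintype.ofFinite α
  have := Fintype.ofFinite β
  have e : (Σ a, {b // r a b}) ≃ Σ b, {a // r a b} :=
    { toFun := fun p => ⟨p.2.1, p.1, p.2.2⟩
      invFun := fun p => ⟨p.2.1, p.1, p.2.2⟩
      left_inv := fun _ => rfl
      right_inv := fun _ => rfl }
  simpa only [Nat.card_sigma, hm, hn, Finset.sum_const, Finset.card_univ, smul_eq_mul,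
    ← Nat.card_eq_fintype_card] using Nat.card_congr e

theorem ZMod.eq_zero_or_eq_one_of_two (a : ZMod 2) : a = 0 ∨ a = 1 := by
  revert a; decide

namespace LinearMap.BilinForm

variable {R M : Type*} [CommRing R] [AddCommGroup M] [Module R M] (B : LinearMap.BilinForm R M)

theorem orthogonal_map_of_isometry (T : M ≃ₗ[R] M) (hT : ∀ x y, B (T x) (T y) = B x y)
    (W : Submodule R M) :
    B.orthogonal (W.map (T : M →ₗ[R] M)) = (B.orthogonal W).map (T : M →ₗ[R] M) := by
  ext u
  constructor
  · intro h
    refine ⟨T.symm u, fun v hv => ?_, T.apply_symm_apply u⟩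
    rw [← hT, T.apply_symm_apply]
    exact h _ (Submodule.mem_map_of_mem hv)
  · rintro ⟨w, hw, rfl⟩ _ ⟨v, hv, rfl⟩
    exact (hT v w).trans (hw v hv)

end LinearMap.BilinForm

section Transvection

variable {M : Type*} [AddCommGroup M] [Module (ZMod 2) M] (B : LinearMap.BilinForm (ZMod 2) M)

theorem add_self_eq_zero_of_zmod_two (x : M) : x + x = 0 := by
  rw [← two_smul (ZMod 2), show (2 : ZMod 2) = 0 from rfl, zero_smul]

def transvection (a : M) : M →ₗ[ZMod 2] M := LinearMap.id + (B.flip a).smulRight a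

theorem transvection_apply (a x : M) : transvection B a x = x + B x a • a := rfl

variable {B}

theorem LinearMap.BilinForm.IsAlt.apply_comm_of_zmod_two (hB : B.IsAlt) (x y : M) :
    B x y = B y x := by
  rw [← hB.neg_eq, ZMod.neg_eq_self_mod_two]

theorem transvection_involutive (hB : B.IsAlt) (a : M) :
    Function.Involutive (transvection B a) := by
  intro x
  rw [transvection_apply, transvection_apply, map_add, LinearMap.add_apply, map_smul,
    LinearMap.smul_apply, hB.self_eq_zero, smul_zero, add_zero, add_assoc,
    add_self_eq_zero_of_zmod_two, add_zero]

theorem transvection_isometry (hB : B.IsAlt) (a x y : M) :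
    B (transvection B a x) (transvection B a y) = B x y := by
  simp only [transvection_apply, map_add, map_smul, LinearMap.add_apply, LinearMap.smul_apply,
    hB.self_eq_zero a, smul_eq_mul, mul_zero, add_zero, hB.apply_comm_of_zmod_two a y]
  rw [add_assoc, mul_comm (B y a), add_self_eq_zero_of_zmod_two, add_zero]

theorem transvection_add_apply_left (hB : B.IsAlt) {x y : M} (h : B x y = 1) :
    transvection B (x + y) x = y := by
  rw [transvection_apply, map_add, hB.self_eq_zero x, zero_add, h, one_smul, ← add_assoc,
    add_self_eq_zero_of_zmod_two, zero_add]

def transvectionEquiv (hB : B.IsAlt) (a : M) : M ≃ₗ[ZMod 2] M :=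
  LinearEquiv.ofInvolutive (transvection B a) (transvection_involutive hB a)

theorem exists_apply_eq_one_and_apply_eq_one (hB : B.IsAlt) (hsep : B.SeparatingLeft) {c d : M}
    (hc : c ≠ 0) (hd : d ≠ 0) : ∃ b, B c b = 1 ∧ B b d = 1 := by
  have exists_one : ∀ {x : M}, x ≠ 0 → ∃ b, B x b = 1 := fun {x} hx => by
    obtain ⟨b, hb⟩ : ∃ b, B x b ≠ 0 := by
      by_contra! h
      exact hx (hsep x h)
    exact ⟨b, (ZMod.eq_zero_or_eq_one_of_two _).resolve_left hb⟩
  obtain ⟨b₀, hb₀⟩ := exists_one hc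
  obtain ⟨b₁, hb₁⟩ := exists_one hd
  simp only [hB.apply_comm_of_zmod_two _ d]
  rcases ZMod.eq_zero_or_eq_one_of_two (B d b₀) with h₀ | h₀
  · rcases ZMod.eq_zero_or_eq_one_of_two (B c b₁) with h₁ | h₁
    · exact ⟨b₀ + b₁, by simp [hb₀, h₁], by simp [h₀, hb₁]⟩
    · exact ⟨b₁, h₁, hb₁⟩
  · exact ⟨b₀, hb₀, h₀⟩

theorem exists_isometry_apply_eq (hB : B.IsAlt) (hsep : B.SeparatingLeft) {c d : M}
    (hc : c ≠ 0) (hd : d ≠ 0) :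
    ∃ T : M ≃ₗ[ZMod 2] M, (∀ x y, B (T x) (T y) = B x y) ∧ T c = d := by
  obtain ⟨b, hcb, hbd⟩ := exists_apply_eq_one_and_apply_eq_one hB hsep hc hd
  refine ⟨(transvectionEquiv hB (c + b)).trans (transvectionEquiv hB (b + d)), fun x y => ?_, ?_⟩
  · simp only [LinearEquiv.trans_apply]
    exact (transvection_isometry hB _ _ _).trans (transvection_isometry hB _ _ _)
  · exact (congrArg _ (transvection_add_apply_left hB hcb)).trans
      (transvection_add_apply_left hB hbd)

end Transvection

section SymplecticSpace

variable {N : ℕ}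

theorem symp_comm (u v : V N) : symp u v = symp v u :=
  Finset.sum_congr rfl fun _ _ => by ring

theorem symp_self (u : V N) : symp u u = 0 :=
  Finset.sum_eq_zero fun n _ => by rw [mul_comm]; exact add_self_eq_zero_of_zmod_two _

theorem symp_add_left (u v w : V N) : symp (u + v) w = symp u w + symp v w := by
  simp only [symp, ← Finset.sum_add_distrib, Pi.add_apply, Prod.fst_add, Prod.snd_add]
  exact Finset.sum_congr rfl fun _ _ => by ring

theorem symp_smul_left (a : ZMod 2) (u v : V N) : symp (a • u) v = a * symp u v := by
  simp only [symp, Finset.mul_sum, Pi.smul_apply, Prod.smul_fst, Prod.smul_snd, smul_eq_mul]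
  exact Finset.sum_congr rfl fun _ _ => by ring

variable (N) in
def sympB : LinearMap.BilinForm (ZMod 2) (V N) :=
  LinearMap.mk₂ (ZMod 2) symp symp_add_left symp_smul_left
    (fun u v w => by rw [symp_comm, symp_add_left, symp_comm v, symp_comm w])
    (fun a u v => by rw [symp_comm, symp_smul_left, symp_comm v, smul_eq_mul])

@[simp]
theorem sympB_apply (u v : V N) : sympB N u v = symp u v := rfl

theorem sympB_isAlt : (sympB N).IsAlt := symp_self

theorem symp_single (u : V N) (n : Fin N) (p : ZMod 2 × ZMod 2) :
    symp u (Pi.single n p) = (u n).1 * p.2 + (u n).2 * p.1 := by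
  rw [symp, Finset.sum_eq_single n (fun m _ hm => by simp [Pi.single_eq_of_ne hm])
    (fun h => absurd (Finset.mem_univ n) h)]
  simp

theorem sympB_separatingLeft : (sympB N).SeparatingLeft := by
  intro u hu
  funext n
  have h₁ := hu (Pi.single n (0, 1))
  have h₂ := hu (Pi.single n (1, 0))
  simp only [sympB_apply, symp_single, mul_one, mul_zero, add_zero, zero_add] at h₁ h₂
  exact Prod.ext h₁ h₂

theorem sympB_nondegenerate : (sympB N).Nondegenerate :=
  sympB_isAlt.isRefl.nondegenerate_iff_separatingLeft.mpr sympB_separatingLeft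

theorem mem_sympDual {C : Submodule (ZMod 2) (V N)} {u : V N} :
    u ∈ sympDual C ↔ ∀ v ∈ C, symp u v = 0 := Iff.rfl

theorem symp_eq_zero_of_mem {C : Submodule (ZMod 2) (V N)} (hC : C = sympDual C) {u v : V N}
    (hu : u ∈ C) (hv : v ∈ C) : symp u v = 0 :=
  mem_sympDual.mp (hC ▸ hu) v hv

theorem sympDual_eq_orthogonal (C : Submodule (ZMod 2) (V N)) :
    sympDual C = (sympB N).orthogonal C := by
  ext u
  simp only [mem_sympDual, LinearMap.BilinForm.mem_orthogonal_iff, sympB_apply, symp_comm _ u]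

theorem finrank_V : Module.finrank (ZMod 2) (V N) = 2 * N := by
  simp [Module.finrank_pi_fintype, Module.finrank_prod, mul_comm]

theorem card_V : Nat.card (V N) = 2 ^ (2 * N) := by
  rw [Module.natCard_eq_pow_finrank (K := ZMod 2), finrank_V, Nat.card_zmod]

theorem finrank_of_eq_sympDual {C : Submodule (ZMod 2) (V N)} (hC : C = sympDual C) :
    Module.finrank (ZMod 2) C = N := by
  have h := (sympB N).finrank_orthogonal sympB_nondegenerate C
  rw [← sympDual_eq_orthogonal, ← hC, finrank_V] at h
  have := finrank_V (N := N) ▸ Submodule.finrank_le C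
  omega

theorem card_of_eq_sympDual {C : Submodule (ZMod 2) (V N)} (hC : C = sympDual C) :
    Nat.card C = 2 ^ N := by
  rw [Module.natCard_eq_pow_finrank (K := ZMod 2), finrank_of_eq_sympDual hC, Nat.card_zmod]

end SymplecticSpace

section Counting

variable {N : ℕ}

variable (N) in
noncomputable def numSelfDual : ℕ :=
  Nat.card {C : Submodule (ZMod 2) (V N) // C = sympDual C}

noncomputable def numSelfDualContaining (c : V N) : ℕ :=
  Nat.card {C : Submodule (ZMod 2) (V N) // C = sympDual C ∧ c ∈ C}

theorem numSelfDualContaining_eq {c d : V N} (hc : c ≠ 0) (hd : d ≠ 0) :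
    numSelfDualContaining c = numSelfDualContaining d := by
  obtain ⟨T, hT, hTc⟩ := exists_isometry_apply_eq sympB_isAlt sympB_separatingLeft hc hd
  let mapT := Submodule.orderIsoMapComap T
  have map_sympDual (C : Submodule (ZMod 2) (V N)) : mapT (sympDual C) = sympDual (mapT C) := by
    simp only [mapT, Submodule.orderIsoMapComap_apply, sympDual_eq_orthogonal]
    exact ((sympB N).orthogonal_map_of_isometry T hT C).symm
  refine Nat.card_congr (mapT.toEquiv.subtypeEquiv fun C => ?_)
  change C = sympDual C ∧ c ∈ C ↔ mapT C = sympDual (mapT C) ∧ d ∈ mapT C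
  rw [← map_sympDual, mapT.injective.eq_iff, ← hTc]
  simp [mapT, Submodule.mem_map_equiv]

theorem numSelfDual_mul_eq {c : V N} (hc : c ≠ 0) :
    numSelfDual N * (2 ^ N - 1) = (2 ^ (2 * N) - 1) * numSelfDualContaining c := by
  have h := Nat.card_mul_eq_card_mul (m := 2 ^ N - 1) (n := numSelfDualContaining c)
    (fun (C : {C : Submodule (ZMod 2) (V N) // C = sympDual C}) (x : {x : V N // x ≠ 0}) =>
      x.1 ∈ C.1) (fun C => ?_) (fun x => ?_)
  · rwa [Nat.card_subtype_ne, card_V] at h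
  · rw [← card_of_eq_sympDual C.2, ← Nat.card_subtype_ne (0 : C.1)]
    exact Nat.card_congr
      { toFun := fun x => ⟨⟨x.1.1, x.2⟩, fun h => x.1.2 (congrArg Subtype.val h)⟩
        invFun := fun y => ⟨⟨y.1.1, fun h => y.2 (Subtype.ext h)⟩, y.1.2⟩
        left_inv := fun _ => rfl
        right_inv := fun _ => rfl }
  · rw [← numSelfDualContaining_eq x.2 hc]
    exact Nat.card_congr (Equiv.subtypeSubtypeEquivSubtypeInter (fun C => C = sympDual C) (x.1 ∈ ·))

end Counting

section Reduction

variable {N : ℕ}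

variable (N) in
def eFirst : V (N + 1) := Pi.single 0 (1, 0)

variable (N) in
def dropFirst : V (N + 1) →ₗ[ZMod 2] V N := LinearMap.funLeft _ _ Fin.succ

variable (N) in
def consZero : V N →ₗ[ZMod 2] V (N + 1) :=
  (Fin.consLinearEquiv (ZMod 2) fun _ => ZMod 2 × ZMod 2).toLinearMap ∘ₗ LinearMap.inr _ _ _

/-- The preimage of `L` under the reduction `e^⊥ → e^⊥ / ⟨e⟩ ≅ V N`, for `e = eFirst N`. -/
def liftSubspace (L : Submodule (ZMod 2) (V N)) : Submodule (ZMod 2) (V (N + 1)) :=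
  LinearMap.ker ((sympB (N + 1)).flip (eFirst N)) ⊓ L.comap (dropFirst N)

theorem eFirst_ne_zero : eFirst N ≠ 0 := fun h => by
  simpa [eFirst] using congrFun h 0

theorem dropFirst_apply (v : V (N + 1)) (n : Fin N) : dropFirst N v n = v n.succ := rfl

theorem consZero_apply_zero (w : V N) : consZero N w 0 = 0 := rfl

theorem dropFirst_consZero (w : V N) : dropFirst N (consZero N w) = w := rfl

theorem dropFirst_eFirst : dropFirst N (eFirst N) = 0 := by
  funext n
  simp [dropFirst_apply, eFirst]

theorem symp_eFirst (v : V (N + 1)) : symp v (eFirst N) = (v 0).2 := by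
  simp [eFirst, symp_single]

theorem symp_eq_add_symp_dropFirst (u v : V (N + 1)) :
    symp u v = ((u 0).1 * (v 0).2 + (u 0).2 * (v 0).1) + symp (dropFirst N u) (dropFirst N v) :=
  Fin.sum_univ_succ _

theorem symp_eq_symp_dropFirst {u v : V (N + 1)} (hu : symp u (eFirst N) = 0)
    (hv : symp v (eFirst N) = 0) : symp u v = symp (dropFirst N u) (dropFirst N v) := by
  rw [symp_eFirst] at hu hv
  rw [symp_eq_add_symp_dropFirst, hu, hv, mul_zero, zero_mul, add_zero, zero_add]

theorem symp_consZero (u : V (N + 1)) (w : V N) :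
    symp u (consZero N w) = symp (dropFirst N u) w := by
  rw [symp_eq_add_symp_dropFirst, dropFirst_consZero, consZero_apply_zero]
  simp

theorem symp_consZero_eFirst (w : V N) : symp (consZero N w) (eFirst N) = 0 := by
  rw [symp_eFirst, consZero_apply_zero]
  rfl

theorem eq_smul_eFirst {v : V (N + 1)} (hv : symp v (eFirst N) = 0) (hd : dropFirst N v = 0) :
    v = (v 0).1 • eFirst N := by
  rw [symp_eFirst] at hv
  funext n
  refine Fin.cases (Prod.ext (by simp [eFirst]) (by simp [eFirst, hv])) (fun i => ?_) n
  have hi := congrFun hd i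
  rw [dropFirst_apply] at hi
  simp [eFirst, hi]

theorem mem_liftSubspace {L : Submodule (ZMod 2) (V N)} {v : V (N + 1)} :
    v ∈ liftSubspace L ↔ symp v (eFirst N) = 0 ∧ dropFirst N v ∈ L := Iff.rfl

theorem eFirst_mem_liftSubspace (L : Submodule (ZMod 2) (V N)) : eFirst N ∈ liftSubspace L :=
  mem_liftSubspace.mpr ⟨symp_self _, dropFirst_eFirst ▸ L.zero_mem⟩

theorem consZero_mem_liftSubspace {L : Submodule (ZMod 2) (V N)} {w : V N} (hw : w ∈ L) :
    consZero N w ∈ liftSubspace L :=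
  mem_liftSubspace.mpr ⟨symp_consZero_eFirst w, hw⟩

variable {C : Submodule (ZMod 2) (V (N + 1))}

theorem liftSubspace_map_dropFirst (hC : C = sympDual C) (he : eFirst N ∈ C) :
    liftSubspace (C.map (dropFirst N)) = C := by
  refine le_antisymm (fun v hv => ?_) fun v hv =>
    mem_liftSubspace.mpr ⟨symp_eq_zero_of_mem hC hv he, Submodule.mem_map_of_mem hv⟩
  obtain ⟨hve, u, hu, huv⟩ := mem_liftSubspace.mp hv
  have hue := symp_eq_zero_of_mem hC hu he
  have hvu : v - u = ((v - u) 0).1 • eFirst N := eq_smul_eFirst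
    ((LinearMap.ker ((sympB (N + 1)).flip (eFirst N))).sub_mem hve hue)
    (by rw [map_sub, huv, sub_self])
  rw [← sub_add_cancel v u, hvu]
  exact C.add_mem (C.smul_mem _ he) hu

theorem map_dropFirst_liftSubspace (L : Submodule (ZMod 2) (V N)) :
    (liftSubspace L).map (dropFirst N) = L := by
  refine le_antisymm ?_ fun w hw => ⟨consZero N w, consZero_mem_liftSubspace hw, rfl⟩
  rintro _ ⟨v, hv, rfl⟩
  exact (mem_liftSubspace.mp hv).2

theorem map_dropFirst_eq_sympDual (hC : C = sympDual C) (he : eFirst N ∈ C) :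
    C.map (dropFirst N) = sympDual (C.map (dropFirst N)) := by
  refine le_antisymm ?_ fun w hw => ⟨consZero N w, ?_, dropFirst_consZero w⟩
  · rintro _ ⟨u, hu, rfl⟩ _ ⟨v, hv, rfl⟩
    rw [← symp_eq_symp_dropFirst (symp_eq_zero_of_mem hC hu he) (symp_eq_zero_of_mem hC hv he)]
    exact symp_eq_zero_of_mem hC hu hv
  · rw [SetLike.mem_coe, hC, mem_sympDual]
    intro u hu
    rw [symp_comm, symp_consZero, symp_comm]
    exact hw _ (Submodule.mem_map_of_mem hu)

theorem liftSubspace_eq_sympDual {L : Submodule (ZMod 2) (V N)} (hL : L = sympDual L) :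
    liftSubspace L = sympDual (liftSubspace L) := by
  refine le_antisymm (fun u hu v hv => ?_) fun u hu => mem_liftSubspace.mpr ⟨?_, ?_⟩
  · obtain ⟨hue, huL⟩ := mem_liftSubspace.mp hu
    obtain ⟨hve, hvL⟩ := mem_liftSubspace.mp hv
    rw [symp_eq_symp_dropFirst hue hve]
    exact symp_eq_zero_of_mem hL huL hvL
  · exact hu _ (eFirst_mem_liftSubspace L)
  · rw [hL, mem_sympDual]
    intro w hw
    rw [← symp_consZero]
    exact hu _ (consZero_mem_liftSubspace hw)

theorem numSelfDualContaining_eFirst : numSelfDualContaining (eFirst N) = numSelfDual N :=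
  Nat.card_congr
    { toFun := fun C => ⟨C.1.map (dropFirst N), map_dropFirst_eq_sympDual C.2.1 C.2.2⟩
      invFun := fun L => ⟨liftSubspace L.1, liftSubspace_eq_sympDual L.2,
        eFirst_mem_liftSubspace L.1⟩
      left_inv := fun C => Subtype.ext (liftSubspace_map_dropFirst C.2.1 C.2.2)
      right_inv := fun L => Subtype.ext (map_dropFirst_liftSubspace L.1) }

end Reduction

theorem numSelfDual_zero : numSelfDual 0 = 1 :=
  Nat.card_eq_one_iff_unique.mpr ⟨inferInstance, ⟨⟨⊥, Subsingleton.elim _ _⟩⟩⟩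

theorem numSelfDual_succ (N : ℕ) : numSelfDual (N + 1) = numSelfDual N * (2 ^ (N + 1) + 1) := by
  have h := numSelfDual_mul_eq (eFirst_ne_zero (N := N))
  have hsq : 2 ^ (2 * (N + 1)) - 1 = (2 ^ (N + 1) + 1) * (2 ^ (N + 1) - 1) := by
    rw [← Nat.sq_sub_sq, one_pow, ← pow_mul, mul_comm (N + 1)]
  rw [numSelfDualContaining_eFirst, hsq] at h
  have hpos : 0 < 2 ^ (N + 1) - 1 := Nat.sub_pos_of_lt (Nat.one_lt_two_pow N.succ_ne_zero)
  refine Nat.eq_of_mul_eq_mul_right hpos ?_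
  rw [h]
  ring

theorem numSelfDual_eq_prod (N : ℕ) : numSelfDual N = ∏ m ∈ Finset.range N, (2 ^ (m + 1) + 1) := by
  induction N with
  | zero => exact numSelfDual_zero
  | succ N ih => rw [numSelfDual_succ, ih, Finset.prod_range_succ]

theorem prod_sub_div_prod_sub (N : ℕ) :
    (∏ n ∈ Finset.Ico 1 N, (2 ^ (2 * N - n) - 2 ^ n)) / ∏ n ∈ Finset.Ico 1 N, (2 ^ N - 2 ^ n) =
      ∏ n ∈ Finset.Ico 1 N, (2 ^ (N - n) + 1) := by
  have factor (n : ℕ) (hn : n ∈ Finset.Ico 1 N) :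
      2 ^ (2 * N - n) - 2 ^ n = (2 ^ N - 2 ^ n) * (2 ^ (N - n) + 1) := by
    have hnN := (Finset.mem_Ico.mp hn).2
    rw [Nat.sub_mul, mul_add, mul_add, ← pow_add, ← pow_add, mul_one, mul_one,
      show N + (N - n) = 2 * N - n by omega, show n + (N - n) = N by omega]
    have := Nat.pow_le_pow_right two_pos hnN.le
    omega
  have hpos : 0 < ∏ n ∈ Finset.Ico 1 N, (2 ^ N - 2 ^ n) := Finset.prod_pos fun n hn =>
    Nat.sub_pos_of_lt (Nat.pow_lt_pow_right one_lt_two (Finset.mem_Ico.mp hn).2)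
  rw [Finset.prod_congr rfl factor, Finset.prod_mul_distrib, Nat.mul_div_cancel_left _ hpos]

theorem prod_Ico_one_eq_prod_range (M : ℕ) :
    ∏ n ∈ Finset.Ico 1 (M + 1), (2 ^ (M + 1 - n) + 1) =
      ∏ m ∈ Finset.range M, (2 ^ (m + 1) + 1) := by
  rw [Finset.prod_Ico_eq_prod_range, ← Finset.prod_range_reflect, Nat.add_sub_cancel]
  exact Finset.prod_congr rfl fun k hk => by
    rw [show M + 1 - (1 + (M - 1 - k)) = k + 1 by have := Finset.mem_range.mp hk; omega]

/-- For any fixed nonzero `c ∈ F_2^{2N}`, the number of symplectic self-dual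
subspaces of `F_2^{2N}` containing `c` equals
`∏_{n=1}^{N-1}(2^{2N-n} - 2^n) / ∏_{n=1}^{N-1}(2^N - 2^n)`. -/
theorem stmt3 (N : ℕ) (c : V N) (hc : c ≠ 0) :
    Nat.card {C : Submodule (ZMod 2) (V N) // C = sympDual C ∧ c ∈ C} =
      (∏ n ∈ Finset.Ico 1 N, (2 ^ (2 * N - n) - 2 ^ n)) /
        (∏ n ∈ Finset.Ico 1 N, (2 ^ N - 2 ^ n)) := by
  cases N with
  | zero => exact absurd (Subsingleton.elim c 0) hc
  | succ M =>
    change numSelfDualContaining c = _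
    rw [numSelfDualContaining_eq hc eFirst_ne_zero, numSelfDualContaining_eFirst,
      numSelfDual_eq_prod, prod_sub_div_prod_sub, prod_Ico_one_eq_prod_range]
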